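/- For a game option (Y,X,X') and fixed σ ∈ T, a pair (σ,y) with y ∈ Φ hedges (Y,X,X') for the seller if and only if y_τ − H_{στ} ∈ K_τ for every stopping time τ ∈ T with τ ≤ σ; consequently the ask price decomposes as π^a_i(Y,X,X') = min over σ ∈ T of p^a_i(σ), where p^a_i(σ) = inf{ z ∈ ℝ : ∃ y ∈ Φ with y_0 = z e^i and y_τ − H_{στ} ∈ K_τ for all τ ∈ T with τ ≤ σ }. -/

import Mathlib

open Pointwise
open scoped MeasureTheory

noncomputable section

/-- Euclidean dot product on `Fin d → ℝ`. -/
def dotp {d : ℕ} (x y : Fin d → ℝ) : ℝ := ∑ i, x i * y i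

/-- The `i`-th canonical basis vector of `ℝ^d`. -/
def eVec {d : ℕ} (i : Fin d) : Fin d → ℝ := Pi.single i 1

/-- The solvency cone determined by a matrix of exchange rates: the convex cone
generated by the canonical basis vectors `e^i` and the vectors `π^{ij} e^i − e^j`. -/
def solvencyCone {d : ℕ} (π : Fin d → Fin d → ℝ) : Set (Fin d → ℝ) :=
  {x | ∃ a : Fin d → ℝ, ∃ b : Fin d → Fin d → ℝ,
    (∀ i, 0 ≤ a i) ∧ (∀ i j, 0 ≤ b i j) ∧
    x = (∑ i, a i • eVec i) + ∑ i, ∑ j, b i j • (π i j • eVec i - eVec j)}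

/-- Positive polar of a set in `ℝ^d`. -/
def posPolar {d : ℕ} (A : Set (Fin d → ℝ)) : Set (Fin d → ℝ) :=
  {x | ∀ y ∈ A, 0 ≤ dotp x y}

/-- A (closed) polyhedron: a finite intersection of closed half-spaces. -/
def IsPolyhedron {d : ℕ} (A : Set (Fin d → ℝ)) : Prop :=
  ∃ (n : ℕ) (a : Fin n → Fin d → ℝ) (b : Fin n → ℝ),
    A = {x | ∀ k, dotp (a k) x ≤ b k}

/-- A finite union of nonempty (closed) polyhedra. -/
def FinUnionPoly {d : ℕ} (A : Set (Fin d → ℝ)) : Prop :=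
  ∃ (n : ℕ) (Q : Fin n → Set (Fin d → ℝ)),
    (∀ k, IsPolyhedron (Q k) ∧ (Q k).Nonempty) ∧ A = ⋃ k, Q k

/-- The atom of the σ-algebra `m` containing `ω`. -/
def atomOf {Ω : Type*} (m : MeasurableSpace Ω) (ω : Ω) : Set Ω :=
  {ω' | ∀ A : Set Ω, MeasurableSet[m] A → ω ∈ A → ω' ∈ A}

variable {Ω : Type*}

/-- A stopping time with values in `0,…,T`. -/
def IsStoppingTime (F : ℕ → MeasurableSpace Ω) (T : ℕ) (τ : Ω → ℕ) : Prop :=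
  (∀ ω, τ ω ≤ T) ∧ ∀ t, MeasurableSet[F t] {ω | τ ω ≤ t}

/-- A randomised stopping time: an adapted nonnegative process with `Σ_{t=0}^T χ_t = 1`. -/
def IsRandomisedST [Fintype Ω] (F : ℕ → MeasurableSpace Ω) (T : ℕ) (χ : ℕ → Ω → ℝ) : Prop :=
  (∀ t, t ≤ T → Measurable[F t] (χ t)) ∧ (∀ t ω, t ≤ T → 0 ≤ χ t ω) ∧
  ∀ ω, ∑ t ∈ Finset.range (T + 1), χ t ω = 1

/-- `χ*_t = Σ_{s=t}^T χ_s`. -/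
def chiStar (T : ℕ) (χ : ℕ → Ω → ℝ) (t : ℕ) (ω : Ω) : ℝ := ∑ s ∈ Finset.Icc t T, χ s ω

/-- The truncated randomised stopping time `χ ∧ σ`,
`(χ∧σ)_t = χ_t 1_{t<σ} + χ*_t 1_{t=σ}`. -/
def trunc (T : ℕ) (χ : ℕ → Ω → ℝ) (σ : Ω → ℕ) (t : ℕ) (ω : Ω) : ℝ :=
  if t < σ ω then χ t ω else if t = σ ω then chiStar T χ t ω else 0

/-- The value `A_χ = Σ_{t=0}^T χ_t A_t` of an (adapted real) process at a randomised
stopping time. -/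
def valAt (T : ℕ) (χ : ℕ → Ω → ℝ) (A : ℕ → Ω → ℝ) (ω : Ω) : ℝ :=
  ∑ t ∈ Finset.range (T + 1), χ t ω * A t ω

/-- Expectation with respect to a probability `p` on a finite space. -/
def expect [Fintype Ω] (p : Ω → ℝ) (f : Ω → ℝ) : ℝ := ∑ ω, p ω * f ω

/-- The game option payoff
`Q_{st} = Y_t 1_{s>t} + X_s 1_{s<t} + X'_s 1_{s=t}`. -/
def payoffQ {d : ℕ} (Y X X' : ℕ → Ω → Fin d → ℝ) (s t : ℕ) (ω : Ω) : Fin d → ℝ :=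
  if t < s then Y t ω else if s < t then X s ω else X' s ω

/-- The auxiliary payoff
`H_{st} = Y_t 1_{s>t} + X_s 1_{s=t<T} + X'_s 1_{s=t=T}`. -/
def payoffH {d : ℕ} (T : ℕ) (Y X X' : ℕ → Ω → Fin d → ℝ) (s t : ℕ) (ω : Ω) : Fin d → ℝ :=
  if t < s then Y t ω
  else if s = t ∧ s < T then X s ω
  else if s = t ∧ s = T then X' s ω
  else 0

/-- `(Q_{σ·}·S_{σ∧·})_χ = Σ_{t=0}^{σ−1} χ_t Y_t·S_t + χ*_{σ+1} X_σ·S_σ + χ_σ X'_σ·S_σ`. -/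
def sellerValue {d : ℕ} (T : ℕ) (Y X X' S : ℕ → Ω → Fin d → ℝ) (σ : Ω → ℕ)
    (χ : ℕ → Ω → ℝ) (ω : Ω) : ℝ :=
  (∑ t ∈ Finset.range (σ ω), χ t ω * dotp (Y t ω) (S t ω))
    + chiStar T χ (σ ω + 1) ω * dotp (X (σ ω) ω) (S (σ ω) ω)
    + χ (σ ω) ω * dotp (X' (σ ω) ω) (S (σ ω) ω)

/-- `(Q_{·τ}·S_{·∧τ})_χ = Σ_{s=0}^{τ−1} χ_s X_s·S_s + χ*_{τ+1} Y_τ·S_τ + χ_τ X'_τ·S_τ`. -/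
def buyerValue {d : ℕ} (T : ℕ) (Y X X' S : ℕ → Ω → Fin d → ℝ) (τ : Ω → ℕ)
    (χ : ℕ → Ω → ℝ) (ω : Ω) : ℝ :=
  (∑ s ∈ Finset.range (τ ω), χ s ω * dotp (X s ω) (S s ω))
    + chiStar T χ (τ ω + 1) ω * dotp (Y (τ ω) ω) (S (τ ω) ω)
    + χ (τ ω) ω * dotp (X' (τ ω) ω) (S (τ ω) ω)

/-- The randomised stopping time `χ'_t = χ_t 1_{t<σ} + χ*_σ 1_{t=T}`. -/
def chiPrime (T : ℕ) (χ : ℕ → Ω → ℝ) (σ : Ω → ℕ) (t : ℕ) (ω : Ω) : ℝ :=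
  if t < σ ω then χ t ω else if t = T then chiStar T χ (σ ω) ω else 0

/-- The Kabanov discrete-time currency model with proportional transaction costs on a
finite probability space. -/
structure Market (Ω : Type*) [Fintype Ω] (d T : ℕ) where
  F : ℕ → MeasurableSpace Ω
  F_mono : ∀ s t : ℕ, s ≤ t → F s ≤ F t
  F_zero : F 0 = ⊥
  F_top : F T = ⊤
  P : Ω → ℝ
  P_pos : ∀ ω, 0 < P ω
  P_sum : ∑ ω, P ω = 1
  pi : ℕ → Fin d → Fin d → Ω → ℝ
  pi_pos : ∀ t, t ≤ T → ∀ i j ω, 0 < pi t i j ω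
  pi_one : ∀ t, t ≤ T → ∀ i ω, pi t i i ω = 1
  pi_meas : ∀ t, t ≤ T → ∀ i j, Measurable[F t] (pi t i j)

variable [Fintype Ω] {d T : ℕ}

/-- The solvency cone `K_t(ω)`. -/
def Market.cone (M : Market Ω d T) (t : ℕ) (ω : Ω) : Set (Fin d → ℝ) :=
  solvencyCone (fun i j => M.pi t i j ω)

/-- Self-financing (predictable) trading strategy. -/
def Market.SelfFinancing (M : Market Ω d T) (y : ℕ → Ω → Fin d → ℝ) : Prop :=
  Measurable[M.F 0] (y 0) ∧ (∀ t, t < T → Measurable[M.F t] (y (t + 1))) ∧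
  ∀ t, t < T → ∀ ω, y t ω - y (t + 1) ω ∈ M.cone t ω

/-- Absence of arbitrage. -/
def Market.NoArbitrage (M : Market Ω d T) : Prop :=
  ¬∃ y : ℕ → Ω → Fin d → ℝ, M.SelfFinancing y ∧ (∀ ω, y 0 ω = 0) ∧
    ∃ x : Ω → Fin d → ℝ, (∀ ω i, 0 ≤ x ω i) ∧ x ≠ 0 ∧ ∀ ω, y T ω - x ω ∈ M.cone T ω

/-- An equivalent martingale pair `(ℙ,S)` with `S_t ∈ K*_t \ {0}`. -/
def MartingalePair (M : Market Ω d T) (p : Ω → ℝ) (S : ℕ → Ω → Fin d → ℝ) : Prop :=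
  (∀ ω, 0 < p ω) ∧ (∑ ω, p ω = 1) ∧
  (∀ t, t ≤ T → Measurable[M.F t] (S t)) ∧
  (∀ t, t < T → ∀ A : Set Ω, MeasurableSet[M.F t] A →
    (∑ ω, A.indicator (fun ω' => p ω' • S (t + 1) ω') ω)
      = ∑ ω, A.indicator (fun ω' => p ω' • S t ω') ω) ∧
  ∀ t ω, t ≤ T → S t ω ∈ posPolar (M.cone t ω) ∧ S t ω ≠ 0

/-- A `χ`-approximate martingale pair `(ℙ,S)`. -/
def ApproxPair (M : Market Ω d T) (χ : ℕ → Ω → ℝ) (p : Ω → ℝ)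
    (S : ℕ → Ω → Fin d → ℝ) : Prop :=
  (∀ ω, 0 ≤ p ω) ∧ (∑ ω, p ω = 1) ∧
  (∀ t, t ≤ T → Measurable[M.F t] (S t)) ∧
  (∀ t ω, t ≤ T → S t ω ∈ posPolar (M.cone t ω) ∧ S t ω ≠ 0) ∧
  ∀ t ω, t ≤ T →
    (∑ ω', (atomOf (M.F t) ω).indicator
      (fun ω'' => p ω'' • ∑ s ∈ Finset.Icc (t + 1) T, χ s ω'' • S s ω'') ω')
      ∈ posPolar (M.cone t ω)

/-- A `χ`-approximate martingale pair with `S^i ≡ 1`: membership of `P̄^i(χ)`. -/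
def ApproxPairI (M : Market Ω d T) (χ : ℕ → Ω → ℝ) (i : Fin d) (p : Ω → ℝ)
    (S : ℕ → Ω → Fin d → ℝ) : Prop :=
  ApproxPair M χ p S ∧ ∀ t ω, t ≤ T → S t ω i = 1

/-- A `χ`-approximate equivalent martingale pair with `S^i ≡ 1`: membership of `P^i(χ)`. -/
def EquivApproxPairI (M : Market Ω d T) (χ : ℕ → Ω → ℝ) (i : Fin d) (p : Ω → ℝ)
    (S : ℕ → Ω → Fin d → ℝ) : Prop :=
  ApproxPairI M χ i p S ∧ ∀ ω, 0 < p ω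

/-- A game option `(Y,X,X')`. -/
def IsGameOption (M : Market Ω d T) (Y X X' : ℕ → Ω → Fin d → ℝ) : Prop :=
  (∀ t, t ≤ T → Measurable[M.F t] (Y t)) ∧ (∀ t, t ≤ T → Measurable[M.F t] (X t)) ∧
  (∀ t, t ≤ T → Measurable[M.F t] (X' t)) ∧
  ∀ t ω, t ≤ T → X t ω - X' t ω ∈ M.cone t ω ∧ X' t ω - Y t ω ∈ M.cone t ω

/-- `(σ,y)` hedges the game option `(Y,X,X')` for the seller:
`y_{σ∧τ} − Q_{στ} ∈ K_{σ∧τ}` for all stopping times `τ`. -/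
def HedgesSeller (M : Market Ω d T) (Y X X' : ℕ → Ω → Fin d → ℝ) (σ : Ω → ℕ)
    (y : ℕ → Ω → Fin d → ℝ) : Prop :=
  ∀ τ, IsStoppingTime M.F T τ → ∀ ω,
    y (min (σ ω) (τ ω)) ω - payoffQ Y X X' (σ ω) (τ ω) ω ∈ M.cone (min (σ ω) (τ ω)) ω

/-- `(τ,y)` hedges the game option `(Y,X,X')` for the buyer:
`y_{σ∧τ} + Q_{στ} ∈ K_{σ∧τ}` for all stopping times `σ`. -/
def HedgesBuyer (M : Market Ω d T) (Y X X' : ℕ → Ω → Fin d → ℝ) (τ : Ω → ℕ)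
    (y : ℕ → Ω → Fin d → ℝ) : Prop :=
  ∀ σ, IsStoppingTime M.F T σ → ∀ ω,
    y (min (σ ω) (τ ω)) ω + payoffQ Y X X' (σ ω) (τ ω) ω ∈ M.cone (min (σ ω) (τ ω)) ω

/-- The seller's sets `Z^a_t` (pointwise at each `ω`), by backward induction:
`Z^a_T = X'_T + K_T` and
`Z^a_t = ((Z^a_{t+1} ∩ L_t) + K_t) ∩ (Y_t + K_t) ∪ (X_t + K_t)` for `t < T`. -/
def Za (M : Market Ω d T) (Y X X' : ℕ → Ω → Fin d → ℝ) (t : ℕ) (ω : Ω) :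
    Set (Fin d → ℝ) :=
  if T ≤ t then {v | v - X' T ω ∈ M.cone T ω}
  else (({v : Fin d → ℝ | ∀ ω' ∈ atomOf (M.F t) ω, v ∈ Za M Y X X' (t + 1) ω'}
          + M.cone t ω)
        ∩ {v | v - Y t ω ∈ M.cone t ω})
      ∪ {v | v - X t ω ∈ M.cone t ω}
termination_by T - t
decreasing_by omega

/-- The seller's set `Y^a_t = Y_t + K_t` (pointwise). -/
def YaSet (M : Market Ω d T) (Y : ℕ → Ω → Fin d → ℝ) (t : ℕ) (ω : Ω) :
    Set (Fin d → ℝ) :=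
  {v | v - Y t ω ∈ M.cone t ω}

/-- The seller's set `X^a_t` (pointwise): `X_t + K_t` for `t < T`, `X'_T + K_T` at `T`. -/
def XaSet (M : Market Ω d T) (X X' : ℕ → Ω → Fin d → ℝ) (t : ℕ) (ω : Ω) :
    Set (Fin d → ℝ) :=
  if T ≤ t then {v | v - X' T ω ∈ M.cone T ω} else {v | v - X t ω ∈ M.cone t ω}

/-- The seller's set `W^a_t = Z^a_{t+1} ∩ L_t` (pointwise: intersection over the atom). -/
def WaSet (M : Market Ω d T) (Y X X' : ℕ → Ω → Fin d → ℝ) (t : ℕ) (ω : Ω) :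
    Set (Fin d → ℝ) :=
  if T ≤ t then Set.univ
  else {v | ∀ ω' ∈ atomOf (M.F t) ω, v ∈ Za M Y X X' (t + 1) ω'}

/-- The seller's set `V^a_t = W^a_t + K_t` (pointwise). -/
def VaSet (M : Market Ω d T) (Y X X' : ℕ → Ω → Fin d → ℝ) (t : ℕ) (ω : Ω) :
    Set (Fin d → ℝ) :=
  if T ≤ t then Set.univ else WaSet M Y X X' t ω + M.cone t ω

/-- The ask (seller's) price of the game option in currency `i`. -/
def askPrice (M : Market Ω d T) (Y X X' : ℕ → Ω → Fin d → ℝ) (i : Fin d) : ℝ :=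
  sInf {z : ℝ | ∃ σ y, IsStoppingTime M.F T σ ∧ M.SelfFinancing y ∧
    HedgesSeller M Y X X' σ y ∧ y 0 = fun _ => z • eVec i}

/-- The bid (buyer's) price of the game option in currency `i`. -/
def bidPrice (M : Market Ω d T) (Y X X' : ℕ → Ω → Fin d → ℝ) (i : Fin d) : ℝ :=
  sSup {w : ℝ | ∃ z : ℝ, ∃ τ y, IsStoppingTime M.F T τ ∧ M.SelfFinancing y ∧
    HedgesBuyer M Y X X' τ y ∧ y 0 = (fun _ => z • eVec i) ∧ w = -z}

/-! Hedging against every exercise time `τ` amounts to hedging against exercise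
times up to `σ` only, because exercising after `σ` gives the buyer `X_σ`, which is also what
exercising at `σ + 1` gives him. The ask price is thus the infimum of the finite union, over the
finitely many stopping times `σ`, of the sets of initial endowments superhedging `H_{σ·}` up to
`σ`; such a union attains its infimum on one of its members provided it is bounded below. The
lower bound comes from a consistent price vector at time `0`: the costs in currency `i` of one
unit of each currency form one, and they are positive by no-arbitrage, since otherwise a round
trip `i → j → i` would produce a free lunch. -/

open Filter

theorem isLeast_csInf_biUnion {ι α : Type*} [ConditionallyCompleteLinearOrder α]
    {s : Set ι} {A : ι → Set α} (hs : s.Finite) (hne : s.Nonempty)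
    (hA : ∀ i ∈ s, (A i).Nonempty) (hbdd : BddBelow (⋃ i ∈ s, A i)) :
    IsLeast {v | ∃ i, i ∈ s ∧ v = sInf (A i)} (sInf (⋃ i ∈ s, A i)) := by
  have hle : ∀ i ∈ s, sInf (⋃ i ∈ s, A i) ≤ sInf (A i) := fun i hi =>
    csInf_le_csInf hbdd (hA i hi) (Set.subset_biUnion_of_mem hi)
  obtain ⟨j, hj, hmin⟩ := Set.exists_min_image s (fun i => sInf (A i)) hs hne
  refine ⟨⟨j, hj, le_antisymm (hle j hj) ?_⟩, ?_⟩
  · obtain ⟨z, hz⟩ := hA j hj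
    refine le_csInf ⟨z, Set.mem_biUnion hj hz⟩ ?_
    simp only [Set.mem_iUnion, exists_prop, forall_exists_index, and_imp]
    exact fun z i hi hz =>
      (hmin i hi).trans (csInf_le (hbdd.mono (Set.subset_biUnion_of_mem hi)) hz)
  · rintro _ ⟨i, hi, rfl⟩
    exact hle i hi

theorem dotp_eq_dotProduct {d : ℕ} (x y : Fin d → ℝ) : dotp x y = x ⬝ᵥ y := rfl

namespace solvencyCone

variable {d : ℕ} {π : Fin d → Fin d → ℝ}

theorem zero_mem : (0 : Fin d → ℝ) ∈ solvencyCone π :=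
  ⟨0, 0, fun _ => le_rfl, fun _ _ => le_rfl, by simp⟩

theorem add_mem {x y : Fin d → ℝ} (hx : x ∈ solvencyCone π) (hy : y ∈ solvencyCone π) :
    x + y ∈ solvencyCone π := by
  obtain ⟨a, b, ha, hb, rfl⟩ := hx
  obtain ⟨a', b', ha', hb', rfl⟩ := hy
  refine ⟨a + a', b + b', fun i => add_nonneg (ha i) (ha' i),
    fun i j => add_nonneg (hb i j) (hb' i j), ?_⟩
  simp only [Pi.add_apply, add_smul, Finset.sum_add_distrib]
  abel

theorem smul_mem {x : Fin d → ℝ} {c : ℝ} (hc : 0 ≤ c) (hx : x ∈ solvencyCone π) :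
    c • x ∈ solvencyCone π := by
  obtain ⟨a, b, ha, hb, rfl⟩ := hx
  refine ⟨c • a, c • b, fun i => mul_nonneg hc (ha i), fun i j => mul_nonneg hc (hb i j), ?_⟩
  simp only [smul_add, Finset.smul_sum, smul_smul, Pi.smul_apply, smul_eq_mul]

theorem sum_mem {ι : Type*} {s : Finset ι} {f : ι → Fin d → ℝ}
    (h : ∀ k ∈ s, f k ∈ solvencyCone π) : ∑ k ∈ s, f k ∈ solvencyCone π :=
  Finset.sum_induction f (· ∈ solvencyCone π) (fun _ _ => add_mem) zero_mem h

theorem eVec_mem (j : Fin d) : eVec j ∈ solvencyCone π :=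
  ⟨Pi.single j 1, 0, fun k => by by_cases hk : k = j <;> simp [hk], fun _ _ => le_rfl, by
    simp [Pi.single_apply]⟩

theorem exchange_mem (i j : Fin d) : π i j • eVec i - eVec j ∈ solvencyCone π := by
  classical
  refine ⟨0, fun k l => if k = i ∧ l = j then 1 else 0, fun _ => le_rfl,
    fun k l => by positivity, ?_⟩
  simp [ite_and, Finset.sum_ite_eq']

theorem smul_eVec_sub_mem {i : Fin d} {c : Fin d → ℝ} {z : ℝ}
    (hz : ∑ j, |c j| * π i j ≤ z) : z • eVec i - c ∈ solvencyCone π := by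
  have hc : c = ∑ j, c j • eVec j := by
    ext k
    simp [eVec, Pi.single_apply]
  -- buy `|c j|` units of every currency `j` with currency `i`, then dispose of the surplus
  have key : z • eVec i - c = (z - ∑ j, |c j| * π i j) • eVec i
      + ∑ j, |c j| • (π i j • eVec i - eVec j) + ∑ j, (|c j| - c j) • eVec j := by
    conv_lhs => rw [hc]
    simp only [sub_smul, smul_sub, smul_smul, Finset.sum_smul, Finset.sum_sub_distrib]
    abel
  rw [key]
  refine add_mem (add_mem (smul_mem (by linarith) (eVec_mem i))
    (sum_mem fun j _ => smul_mem (abs_nonneg _) (exchange_mem i j)))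
    (sum_mem fun j _ => smul_mem (by linarith [le_abs_self (c j)]) (eVec_mem j))

theorem eventually_smul_eVec_sub_mem (i : Fin d) (c : Fin d → ℝ) :
    ∀ᶠ z : ℝ in atTop, z • eVec i - c ∈ solvencyCone π :=
  eventually_atTop.2 ⟨∑ j, |c j| * π i j, fun _ => smul_eVec_sub_mem⟩

theorem mem_posPolar {S : Fin d → ℝ} (hS₀ : ∀ j, 0 ≤ S j) (hS : ∀ a b, S b ≤ π a b * S a) :
    S ∈ posPolar (solvencyCone π) := by
  rintro _ ⟨a, b, ha, hb, rfl⟩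
  simp only [dotp_eq_dotProduct, dotProduct_add, dotProduct_sum, dotProduct_smul,
    dotProduct_sub, eVec, dotProduct_single, smul_eq_mul, mul_one]
  exact add_nonneg (Finset.sum_nonneg fun j _ => mul_nonneg (ha j) (hS₀ j))
    (Finset.sum_nonneg fun a _ => Finset.sum_nonneg fun b _ =>
      mul_nonneg (hb a b) (by linarith [hS a b]))

theorem one_div_le_of_smul_eVec_sub_eVec_mem {i j : Fin d} {c : ℝ} (hπ : 0 < π j i)
    (hfree : ∀ ε : ℝ, 0 < ε → -(ε • eVec i) ∉ solvencyCone π)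
    (hc : c • eVec i - eVec j ∈ solvencyCone π) : 1 / π j i ≤ c := by
  -- converting back into currency `i` must not yield a free lunch
  have hround : (π j i * c - 1) • eVec i ∈ solvencyCone π := by
    have := add_mem (smul_mem hπ.le hc) (exchange_mem (π := π) j i)
    rw [smul_sub, smul_smul, sub_add_sub_cancel] at this
    rwa [sub_smul, one_smul]
  rw [div_le_iff₀ hπ]
  by_contra hlt
  refine hfree (1 - π j i * c) (by linarith) ?_
  rwa [← neg_smul, neg_sub]

variable (π) in
noncomputable def replicationCost (i j : Fin d) : ℝ :=
  sInf {c | c • eVec i - eVec j ∈ solvencyCone π}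

theorem one_div_le_replicationCost {i : Fin d} (hπ : ∀ j k, 0 < π j k)
    (hfree : ∀ ε : ℝ, 0 < ε → -(ε • eVec i) ∉ solvencyCone π) (j : Fin d) :
    1 / π j i ≤ replicationCost π i j :=
  le_csInf ⟨π i j, exchange_mem i j⟩ fun _ =>
    one_div_le_of_smul_eVec_sub_eVec_mem (hπ j i) hfree

theorem replicationCost_le_mul {i : Fin d} (hπ : ∀ j k, 0 < π j k)
    (hfree : ∀ ε : ℝ, 0 < ε → -(ε • eVec i) ∉ solvencyCone π) (a b : Fin d) :
    replicationCost π i b ≤ π a b * replicationCost π i a := by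
  unfold replicationCost
  rw [← smul_eq_mul, ← Real.sInf_smul_of_nonneg (hπ a b).le]
  refine csInf_le_csInf ⟨_, fun _ => one_div_le_of_smul_eVec_sub_eVec_mem (hπ b i) hfree⟩
    (Set.Nonempty.smul_set ⟨π i a, exchange_mem (π := π) i a⟩) ?_
  rintro _ ⟨c, hc, rfl⟩
  have := add_mem (smul_mem (hπ a b).le hc) (exchange_mem (π := π) a b)
  rwa [smul_sub, smul_smul, sub_add_sub_cancel] at this

theorem exists_mem_posPolar_pos {i : Fin d} (hπ : ∀ j k, 0 < π j k)
    (hfree : ∀ ε : ℝ, 0 < ε → -(ε • eVec i) ∉ solvencyCone π) :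
    ∃ S ∈ posPolar (solvencyCone π), 0 < S i := by
  have hpos : ∀ j, 0 < replicationCost π i j := fun j =>
    (one_div_pos.2 (hπ j i)).trans_le (one_div_le_replicationCost hπ hfree j)
  exact ⟨replicationCost π i, mem_posPolar (fun j => (hpos j).le)
    (replicationCost_le_mul hπ hfree), hpos i⟩

theorem bddBelow_setOf_smul_eVec_sub_mem {i : Fin d} (hπ : ∀ j k, 0 < π j k)
    (hfree : ∀ ε : ℝ, 0 < ε → -(ε • eVec i) ∉ solvencyCone π) (c : Fin d → ℝ) :
    BddBelow {z : ℝ | z • eVec i - c ∈ solvencyCone π} := by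
  obtain ⟨S, hS, hSi⟩ := exists_mem_posPolar_pos hπ hfree
  refine ⟨dotp S c / S i, fun z hz => ?_⟩
  have := hS _ hz
  rw [dotp_eq_dotProduct, dotProduct_sub, dotProduct_smul, eVec, dotProduct_single, mul_one,
    smul_eq_mul, ← dotp_eq_dotProduct] at this
  rw [div_le_iff₀ hSi]
  linarith

end solvencyCone

section StoppingTime

variable {Ω : Type*} {F : ℕ → MeasurableSpace Ω} {T : ℕ} {σ τ : Ω → ℕ}

theorem isStoppingTime_const {s : ℕ} (hs : s ≤ T) : IsStoppingTime F T fun _ => s := by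
  refine ⟨fun _ => hs, fun t => ?_⟩
  by_cases h : s ≤ t
  · simp only [h, Set.ofPred_true, MeasurableSet.univ]
  · simp only [h, Set.ofPred_false, MeasurableSet.empty]

theorem IsStoppingTime.measurableSet_lt (hF : Monotone F) (hτ : IsStoppingTime F T τ) (t : ℕ) :
    MeasurableSet[F t] {ω | τ ω < t} := by
  cases t with
  | zero => simp only [Nat.not_lt_zero, Set.ofPred_false, MeasurableSet.empty]
  | succ s => simpa only [Nat.lt_succ_iff] using hF s.le_succ _ (hτ.2 s)

theorem IsStoppingTime.succ_min (hF : Monotone F) (hτ : IsStoppingTime F T τ) :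
    IsStoppingTime F T fun ω => min (τ ω + 1) T := by
  refine ⟨fun ω => min_le_right _ _, fun t => ?_⟩
  by_cases ht : T ≤ t
  · simp only [min_le_iff, ht, or_true, Set.ofPred_true, MeasurableSet.univ]
  · simpa only [min_le_iff, ht, or_false, Nat.succ_le_iff] using hτ.measurableSet_lt hF t

theorem IsStoppingTime.min (hσ : IsStoppingTime F T σ) (hτ : IsStoppingTime F T τ) :
    IsStoppingTime F T fun ω => min (σ ω) (τ ω) := by
  refine ⟨fun ω => (min_le_left _ _).trans (hσ.1 ω), fun t => ?_⟩
  simp only [min_le_iff, Set.ofPred_or]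
  exact (hσ.2 t).union (hτ.2 t)

theorem finite_setOf_isStoppingTime [Finite Ω] : {τ | IsStoppingTime F T τ}.Finite :=
  (Set.Finite.pi (t := fun _ : Ω => Set.Iic T) fun _ => Set.finite_Iic T).subset
    fun _ hτ ω _ => hτ.1 ω

end StoppingTime

namespace Market

variable {Ω : Type*} [Fintype Ω] {d T : ℕ}

theorem nonempty (M : Market Ω d T) : Nonempty Ω := by
  by_contra h
  simpa [not_nonempty_iff.1 h] using M.P_sum

theorem cone_zero_eq (M : Market Ω d T) (ω ω' : Ω) : M.cone 0 ω = M.cone 0 ω' := by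
  have hconst : ∀ a b, M.pi 0 a b ω = M.pi 0 a b ω' := fun a b => by
    have hmeas := M.pi_meas 0 (Nat.zero_le T) a b
    rw [M.F_zero] at hmeas
    obtain ⟨c, hc⟩ := eq_const_of_measurable_bot hmeas
    rw [hc]
  simp only [Market.cone, hconst]

variable {M : Market Ω d T}

theorem NoArbitrage.neg_notMem_cone_zero (hNA : M.NoArbitrage) {x : Fin d → ℝ}
    (hx₀ : ∀ j, 0 ≤ x j) (hx : x ≠ 0) (ω : Ω) : -x ∉ M.cone 0 ω := by
  intro hmem
  obtain ⟨ω₀⟩ := M.nonempty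
  -- `-x ∈ K_0` lets one trade the zero position into `x` at time `0`
  refine hNA ⟨fun t _ => if t = 0 then 0 else x, ⟨measurable_const,
    fun _ _ => measurable_const, fun t _ ω' => ?_⟩, fun _ => rfl,
    fun _ => x, fun _ => hx₀, fun h => hx (congrFun h ω₀), fun ω' => ?_⟩
  · rcases eq_or_ne t 0 with rfl | ht
    · simpa [M.cone_zero_eq ω' ω] using hmem
    · simp only [ht, Nat.add_one_ne_zero, if_false, sub_self]
      exact solvencyCone.zero_mem
  · rcases eq_or_ne T 0 with hT | hT
    · simpa [hT, M.cone_zero_eq ω' ω] using hmem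
    · simp only [hT, if_false, sub_self]
      exact solvencyCone.zero_mem

theorem NoArbitrage.bddBelow_setOf_smul_eVec_sub_mem_cone_zero (hNA : M.NoArbitrage)
    (i : Fin d) (c : Fin d → ℝ) (ω : Ω) :
    BddBelow {z : ℝ | z • eVec i - c ∈ M.cone 0 ω} := by
  refine solvencyCone.bddBelow_setOf_smul_eVec_sub_mem (M.pi_pos 0 (Nat.zero_le T) · · ω)
    (fun ε hε => hNA.neg_notMem_cone_zero ?_ ?_ ω) c
  · exact smul_nonneg hε.le (Pi.single_nonneg.2 zero_le_one : (0 : Fin d → ℝ) ≤ eVec i)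
  · exact smul_ne_zero hε.ne' (Pi.single_eq_zero_iff.not.2 one_ne_zero)

end Market

section Payoff

variable {Ω : Type*} {d T : ℕ} {Y X X' : ℕ → Ω → Fin d → ℝ} {s t : ℕ} {ω : Ω}

theorem payoffQ_of_lt (h : t < s) : payoffQ Y X X' s t ω = Y t ω := if_pos h

theorem payoffQ_of_gt (h : s < t) : payoffQ Y X X' s t ω = X s ω := by
  simp [payoffQ, h, h.not_gt]

theorem payoffQ_self : payoffQ Y X X' s s ω = X' s ω := by simp [payoffQ]

theorem payoffH_of_lt (h : t < s) : payoffH T Y X X' s t ω = Y t ω := if_pos h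

theorem payoffH_self_of_lt (h : s < T) : payoffH T Y X X' s s ω = X s ω := by
  simp [payoffH, h]

theorem payoffH_self_of_eq (h : s = T) : payoffH T Y X X' s s ω = X' s ω := by
  subst h
  simp [payoffH]

end Payoff

namespace IsGameOption

variable {Ω : Type*} [Fintype Ω] {d T : ℕ} {M : Market Ω d T} {Y X X' : ℕ → Ω → Fin d → ℝ}
  {s t : ℕ}

theorem X_sub_X'_mem_cone (hGO : IsGameOption M Y X X') (ht : t ≤ T) (ω : Ω) :
    X t ω - X' t ω ∈ M.cone t ω :=
  (hGO.2.2.2 t ω ht).1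

theorem X'_sub_Y_mem_cone (hGO : IsGameOption M Y X X') (ht : t ≤ T) (ω : Ω) :
    X' t ω - Y t ω ∈ M.cone t ω :=
  (hGO.2.2.2 t ω ht).2

theorem payoffH_sub_mem_cone (hGO : IsGameOption M Y X X') (hts : t ≤ s) (hs : s ≤ T)
    (ω : Ω) : payoffH T Y X X' s t ω - Y t ω ∈ M.cone t ω := by
  rcases hts.lt_or_eq with hlt | rfl
  · rw [payoffH_of_lt hlt, sub_self]
    exact solvencyCone.zero_mem
  rcases hs.lt_or_eq with hT | rfl
  · have := solvencyCone.add_mem (hGO.X_sub_X'_mem_cone hs ω) (hGO.X'_sub_Y_mem_cone hs ω)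
    rwa [payoffH_self_of_lt hT, ← sub_add_sub_cancel _ (X' t ω)]
  · rw [payoffH_self_of_eq rfl]
    exact hGO.X'_sub_Y_mem_cone hs ω

theorem payoffH_min_sub_payoffQ_mem_cone (hGO : IsGameOption M Y X X') (hs : s ≤ T)
    (ht : t ≤ T) (ω : Ω) :
    payoffH T Y X X' s (min s t) ω - payoffQ Y X X' s t ω ∈ M.cone (min s t) ω := by
  rcases lt_or_ge t s with hts | hst
  · rw [min_eq_right hts.le, payoffH_of_lt hts, payoffQ_of_lt hts, sub_self]
    exact solvencyCone.zero_mem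
  rw [min_eq_left hst]
  rcases hs.lt_or_eq with hsT | rfl
  · rw [payoffH_self_of_lt hsT]
    rcases hst.lt_or_eq with hlt | rfl
    · rw [payoffQ_of_gt hlt, sub_self]
      exact solvencyCone.zero_mem
    · rw [payoffQ_self]
      exact hGO.X_sub_X'_mem_cone hs ω
  · obtain rfl : t = s := le_antisymm ht hst
    rw [payoffH_self_of_eq rfl, payoffQ_self, sub_self]
    exact solvencyCone.zero_mem

end IsGameOption

section Hedging

variable {Ω : Type*} [Fintype Ω] {d T : ℕ} {M : Market Ω d T} {Y X X' : ℕ → Ω → Fin d → ℝ}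
  {σ : Ω → ℕ} {y : ℕ → Ω → Fin d → ℝ}

def HedgesSellerUntil (M : Market Ω d T) (Y X X' : ℕ → Ω → Fin d → ℝ) (σ : Ω → ℕ)
    (y : ℕ → Ω → Fin d → ℝ) : Prop :=
  ∀ τ, IsStoppingTime M.F T τ → (∀ ω, τ ω ≤ σ ω) → ∀ ω,
    y (τ ω) ω - payoffH T Y X X' (σ ω) (τ ω) ω ∈ M.cone (τ ω) ω

theorem HedgesSeller.hedgesSellerUntil (hσ : IsStoppingTime M.F T σ)
    (h : HedgesSeller M Y X X' σ y) : HedgesSellerUntil M Y X X' σ y := by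
  intro τ hτ hτσ ω
  rcases (hτσ ω).lt_or_eq with hlt | heq
  · simpa only [min_eq_right hlt.le, payoffQ_of_lt hlt, payoffH_of_lt hlt] using h τ hτ ω
  rw [heq]
  rcases (hσ.1 ω).lt_or_eq with hT | hT
  · have := h _ (hτ.succ_min M.F_mono) ω
    rw [payoffH_self_of_lt hT]
    rwa [heq, min_eq_left (Nat.succ_le_of_lt hT), min_eq_left (Nat.le_succ _),
      payoffQ_of_gt (Nat.lt_succ_self _)] at this
  · have := h τ hτ ω
    rw [payoffH_self_of_eq hT]
    rwa [heq, min_self, payoffQ_self] at this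

theorem HedgesSellerUntil.hedgesSeller (hGO : IsGameOption M Y X X')
    (hσ : IsStoppingTime M.F T σ) (h : HedgesSellerUntil M Y X X' σ y) :
    HedgesSeller M Y X X' σ y := by
  intro τ hτ ω
  have := solvencyCone.add_mem (h _ (hσ.min hτ) (fun _ => min_le_left _ _) ω)
    (hGO.payoffH_min_sub_payoffQ_mem_cone (hσ.1 ω) (hτ.1 ω) ω)
  rwa [sub_add_sub_cancel] at this

theorem hedgesSeller_iff_hedgesSellerUntil (hGO : IsGameOption M Y X X')
    (hσ : IsStoppingTime M.F T σ) :
    HedgesSeller M Y X X' σ y ↔ HedgesSellerUntil M Y X X' σ y :=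
  ⟨HedgesSeller.hedgesSellerUntil hσ, HedgesSellerUntil.hedgesSeller hGO hσ⟩

end Hedging

section Endowments

variable {Ω : Type*} [Fintype Ω] {d T : ℕ} {M : Market Ω d T} {Y X X' : ℕ → Ω → Fin d → ℝ}

/-- `p^a_i(σ)` is the infimum of this set. -/
def hedgingEndowments (M : Market Ω d T) (Y X X' : ℕ → Ω → Fin d → ℝ) (i : Fin d)
    (σ : Ω → ℕ) : Set ℝ :=
  {z | ∃ y, M.SelfFinancing y ∧ (y 0 = fun _ => z • eVec i) ∧ HedgesSellerUntil M Y X X' σ y}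

theorem hedgingEndowments_nonempty (i : Fin d) (σ : Ω → ℕ) :
    (hedgingEndowments M Y X X' i σ).Nonempty := by
  obtain ⟨z, hz⟩ := (eventually_all.2 fun p : Fin (T + 1) × Ω =>
    solvencyCone.eventually_smul_eVec_sub_mem (π := (M.pi p.1 · · p.2)) i
      (payoffH T Y X X' (σ p.2) p.1 p.2)).exists
  refine ⟨z, fun _ _ => z • eVec i, ⟨measurable_const, fun _ _ => measurable_const,
    fun _ _ _ => ?_⟩, rfl, fun τ hτ _ ω => ?_⟩
  · rw [sub_self]
    exact solvencyCone.zero_mem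
  · exact hz (⟨τ ω, Nat.lt_succ_of_le (hτ.1 ω)⟩, ω)

theorem askPrice_eq_sInf_biUnion (hGO : IsGameOption M Y X X') (i : Fin d) :
    askPrice M Y X X' i =
      sInf (⋃ σ ∈ {σ | IsStoppingTime M.F T σ}, hedgingEndowments M Y X X' i σ) := by
  unfold askPrice hedgingEndowments
  congr 1
  ext z
  simp only [Set.mem_ofPred_eq, Set.mem_iUnion, exists_prop]
  constructor
  · rintro ⟨σ, y, hσ, hy, hedge, hy₀⟩
    exact ⟨σ, hσ, y, hy, hy₀, hedge.hedgesSellerUntil hσ⟩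
  · rintro ⟨σ, hσ, y, hy, hy₀, hedge⟩
    exact ⟨σ, y, hσ, hy, hedge.hedgesSeller hGO hσ, hy₀⟩

theorem bddBelow_biUnion_hedgingEndowments (hNA : M.NoArbitrage)
    (hGO : IsGameOption M Y X X') (i : Fin d) :
    BddBelow (⋃ σ ∈ {σ | IsStoppingTime M.F T σ}, hedgingEndowments M Y X X' i σ) := by
  obtain ⟨ω⟩ := M.nonempty
  refine (hNA.bddBelow_setOf_smul_eVec_sub_mem_cone_zero i (Y 0 ω) ω).mono ?_
  simp only [Set.iUnion_subset_iff]
  rintro σ hσ z ⟨y, -, hy₀, hedge⟩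
  have h0 := hedge _ (isStoppingTime_const (Nat.zero_le T)) (fun _ => Nat.zero_le _) ω
  rw [hy₀] at h0
  have := solvencyCone.add_mem h0 (hGO.payoffH_sub_mem_cone (Nat.zero_le _) (hσ.1 ω) ω)
  rwa [sub_add_sub_cancel] at this

end Endowments

/-- For a fixed cancellation time `σ`, the pair `(σ,y)` hedges the game option
`(Y,X,X')` for the seller if and only if `y_τ − H_{στ} ∈ K_τ` for every stopping time
`τ ≤ σ`; consequently the ask price decomposes as
`π^a_i(Y,X,X') = min_{σ∈T} p^a_i(σ)` with
`p^a_i(σ) = inf{z : ∃ y ∈ Φ, y_0 = z e^i, y_τ − H_{στ} ∈ K_τ ∀ τ ∈ T, τ ≤ σ}`. -/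
theorem askPrice_decomposition {Ω : Type*} [Fintype Ω] {d T : ℕ}
    (M : Market Ω d T) (hNA : M.NoArbitrage)
    (Y X X' : ℕ → Ω → Fin d → ℝ) (hGO : IsGameOption M Y X X') (i : Fin d) :
    (∀ σ y, IsStoppingTime M.F T σ → M.SelfFinancing y →
      (HedgesSeller M Y X X' σ y ↔
        ∀ τ, IsStoppingTime M.F T τ → (∀ ω, τ ω ≤ σ ω) → ∀ ω,
          y (τ ω) ω - payoffH T Y X X' (σ ω) (τ ω) ω ∈ M.cone (τ ω) ω)) ∧
    IsLeast {v : ℝ | ∃ σ, IsStoppingTime M.F T σ ∧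
        v = sInf {z : ℝ | ∃ y, M.SelfFinancing y ∧ (y 0 = fun _ => z • eVec i) ∧
          ∀ τ, IsStoppingTime M.F T τ → (∀ ω, τ ω ≤ σ ω) → ∀ ω,
            y (τ ω) ω - payoffH T Y X X' (σ ω) (τ ω) ω ∈ M.cone (τ ω) ω}}
      (askPrice M Y X X' i) := by
  refine ⟨fun σ y hσ _ => hedgesSeller_iff_hedgesSellerUntil hGO hσ, ?_⟩
  rw [askPrice_eq_sInf_biUnion hGO]
  exact isLeast_csInf_biUnion finite_setOf_isStoppingTime
    ⟨_, isStoppingTime_const (Nat.zero_le T)⟩ (fun σ _ => hedgingEndowments_nonempty i σ)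
    (bddBelow_biUnion_hedgingEndowments hNA hGO i)
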